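/- The two-soliton function Ψ₂(X, T) = 4e^{iT} · (cosh(3X) + 3e^{8iT} cosh(X)) / (cosh(4X) + 4cosh(2X) + 3cos(8T)) satisfies the focusing nonlinear Schrödinger equation iΨ_T + Ψ_XX + 2|Ψ|²Ψ = 0 for all (X, T) ∈ ℝ × ℝ (the denominator cosh 4X + 4cosh 2X + 3cos 8T is strictly positive). -/

import Mathlib

/-- The two-soliton solution of the focusing nonlinear Schrödinger equation. -/
noncomputable def Psi₂ (X T : ℝ) : ℂ :=
  4 * Complex.exp (Complex.I * T) *
      (Complex.cosh (3 * X) + 3 * Complex.exp (8 * Complex.I * T) * Complex.cosh X) /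
    ((Real.cosh (4 * X) + 4 * Real.cosh (2 * X) + 3 * Real.cos (8 * T) : ℝ) : ℂ)

/-!
Write `Ψ = g / f` with `f` real and nonvanishing. The quotient rule gives
`f³ (iΨ_T + Ψ_XX + 2|Ψ|²Ψ)`
`  = f (i(g_T f - g f_T) + g_XX f - 2 g_X f_X + g f_XX) - 2 g (f f_XX - f_X² - |g|²)`,
so `Ψ` solves the focusing NLS as soon as `g` and `f` satisfy Hirota's bilinear equations
`i(g_T f - g f_T) + g_XX f - 2 g_X f_X + g f_XX = 0` and `f f_XX - f_X² = |g|²`.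
For `Ψ₂` (numerator `g`, denominator `f`) both become identities between Laurent polynomials in
`e^{iT}` and `e^X`.
-/

open Complex ComplexConjugate

theorem focusingNLS_of_hirota_bilinear {g gX gXX gT : ℝ → ℝ → ℂ}
    {f fX fXX fT : ℝ → ℝ → ℝ} (hgX : ∀ x t, HasDerivAt (g · t) (gX x t) x)
    (hgXX : ∀ x t, HasDerivAt (gX · t) (gXX x t) x) (hgT : ∀ x t, HasDerivAt (g x ·) (gT x t) t)
    (hfX : ∀ x t, HasDerivAt (f · t) (fX x t) x) (hfXX : ∀ x t, HasDerivAt (fX · t) (fXX x t) x)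
    (hfT : ∀ x t, HasDerivAt (f x ·) (fT x t) t) (hf : ∀ x t, f x t ≠ 0)
    (hdisp : ∀ x t, I * (gT x t * f x t - g x t * fT x t)
      + (gXX x t * f x t - 2 * gX x t * fX x t + g x t * fXX x t) = 0)
    (hnorm : ∀ x t, f x t * fXX x t - fX x t ^ 2 = ‖g x t‖ ^ 2) (x t : ℝ) :
    I * deriv (fun s => g x s / f x s) t + deriv (fun u => deriv (fun v => g v t / f v t) u) x
      + 2 * (‖g x t / f x t‖ : ℂ) ^ 2 * (g x t / f x t) = 0 := by
  have hf' : ∀ x t, (f x t : ℂ) ≠ 0 := fun x t => ofReal_ne_zero.mpr (hf x t)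
  have hΨT : deriv (fun s => g x s / f x s) t
      = (gT x t * f x t - g x t * fT x t) / (f x t : ℂ) ^ 2 :=
    ((hgT x t).div (hfT x t).ofReal_comp (hf' x t)).deriv
  have hΨX : (fun u => deriv (fun v => g v t / f v t) u)
      = fun u => (gX u t * f u t - g u t * fX u t) / (f u t : ℂ) ^ 2 :=
    funext fun u => ((hgX u t).div (hfX u t).ofReal_comp (hf' u t)).deriv
  have hΨXX : HasDerivAt (fun u => (gX u t * f u t - g u t * fX u t) / (f u t : ℂ) ^ 2) _ x :=
    (((hgXX x t).mul (hfX x t).ofReal_comp).sub ((hgX x t).mul (hfXX x t).ofReal_comp)).fun_div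
      ((hfX x t).ofReal_comp.pow 2) (pow_ne_zero 2 (hf' x t))
  have hnormΨ : (‖g x t / f x t‖ : ℂ) ^ 2
      = (f x t * fXX x t - fX x t ^ 2 : ℝ) / (f x t : ℂ) ^ 2 := by
    have : ‖g x t / f x t‖ ^ 2 = ‖g x t‖ ^ 2 / f x t ^ 2 := by
      rw [norm_div, norm_real, Real.norm_eq_abs, div_pow, sq_abs]
    rw [hnorm]
    exact_mod_cast this
  rw [hΨT, hΨX, hΨXX.deriv, hnormΨ]
  simp only [Pi.mul_apply, Pi.sub_apply]
  push_cast
  field_simp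
  rw [div_eq_zero_iff, or_iff_left (pow_ne_zero 3 (hf' x t))]
  linear_combination (f x t : ℂ) * hdisp x t

theorem HasDerivAt.comp_const_mul_ofReal {F : ℂ → ℂ} {F' k : ℂ} {x : ℝ}
    (h : HasDerivAt F F' (k * x)) : HasDerivAt (fun y : ℝ => F (k * y)) (F' * k) x :=
  h.comp x (by simpa using (hasDerivAt_id x).ofReal_comp.const_mul k)

namespace Complex

theorem cosh_eq_exp_add_inv (z : ℂ) : cosh z = (exp z + (exp z)⁻¹) / 2 := by
  rw [cosh, exp_neg]

theorem sinh_eq_exp_sub_inv (z : ℂ) : sinh z = (exp z - (exp z)⁻¹) / 2 := by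
  rw [sinh, exp_neg]

theorem cosh_ofNat_mul (n : ℕ) [n.AtLeastTwo] (z : ℂ) :
    cosh (ofNat(n) * z) = (exp z ^ n + (exp z ^ n)⁻¹) / 2 := by
  rw [cosh, ← exp_nat_mul, ← exp_neg]
  rfl

theorem sinh_ofNat_mul (n : ℕ) [n.AtLeastTwo] (z : ℂ) :
    sinh (ofNat(n) * z) = (exp z ^ n - (exp z ^ n)⁻¹) / 2 := by
  rw [sinh, ← exp_nat_mul, ← exp_neg]
  rfl

theorem cos_ofNat_mul (n : ℕ) [n.AtLeastTwo] (z : ℂ) :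
    cos (ofNat(n) * z) = (exp (I * z) ^ n + (exp (I * z) ^ n)⁻¹) / 2 := by
  rw [← cosh_mul_I, mul_right_comm, mul_assoc, cosh_ofNat_mul]

theorem sin_ofNat_mul (n : ℕ) [n.AtLeastTwo] (z : ℂ) :
    sin (ofNat(n) * z) = ((exp (I * z) ^ n)⁻¹ - exp (I * z) ^ n) * I / 2 := by
  have h := sinh_mul_I (ofNat(n) * z)
  rw [mul_right_comm, mul_assoc, sinh_ofNat_mul] at h
  linear_combination I * h + sin (ofNat(n) * z) * I_sq

theorem exp_ofNat_mul_I_mul (n : ℕ) [n.AtLeastTwo] (z : ℂ) :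
    exp (ofNat(n) * I * z) = exp (I * z) ^ n := by
  rw [← exp_nat_mul, mul_assoc]
  rfl

end Complex

namespace TwoSoliton

noncomputable section

def num (x t : ℝ) : ℂ := 4 * exp (I * t) * (cosh (3 * x) + 3 * exp (8 * I * t) * cosh x)
def numX (x t : ℝ) : ℂ := 4 * exp (I * t) * (3 * sinh (3 * x) + 3 * exp (8 * I * t) * sinh x)
def numXX (x t : ℝ) : ℂ := 4 * exp (I * t) * (9 * cosh (3 * x) + 3 * exp (8 * I * t) * cosh x)
def numT (x t : ℝ) : ℂ := 4 * I * exp (I * t) * (cosh (3 * x) + 27 * exp (8 * I * t) * cosh x)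

def den (x t : ℝ) : ℝ := Real.cosh (4 * x) + 4 * Real.cosh (2 * x) + 3 * Real.cos (8 * t)
def denX (x _t : ℝ) : ℝ := 4 * Real.sinh (4 * x) + 8 * Real.sinh (2 * x)
def denXX (x _t : ℝ) : ℝ := 16 * Real.cosh (4 * x) + 16 * Real.cosh (2 * x)
def denT (_x t : ℝ) : ℝ := -24 * Real.sin (8 * t)

end

theorem den_pos (x t : ℝ) : 0 < den x t := by
  unfold den
  linarith [Real.one_le_cosh (4 * x), Real.one_le_cosh (2 * x), Real.neg_one_le_cos (8 * t)]

theorem hasDerivAt_num_x (x t : ℝ) : HasDerivAt (num · t) (numX x t) x := by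
  have h3 := (hasDerivAt_cosh (3 * x)).comp_const_mul_ofReal
  have h1 := (hasDerivAt_cosh x).comp_ofReal
  refine ((h3.add (h1.const_mul (3 * exp (8 * I * t)))).const_mul
    (4 * exp (I * t))).congr_deriv ?_
  rw [numX]
  ring

theorem hasDerivAt_numX_x (x t : ℝ) : HasDerivAt (numX · t) (numXX x t) x := by
  have h3 := (hasDerivAt_sinh (3 * x)).comp_const_mul_ofReal
  have h1 := (hasDerivAt_sinh x).comp_ofReal
  refine (((h3.const_mul 3).add (h1.const_mul (3 * exp (8 * I * t)))).const_mul
    (4 * exp (I * t))).congr_deriv ?_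
  rw [numXX]
  ring

theorem hasDerivAt_num_t (x t : ℝ) : HasDerivAt (num x ·) (numT x t) t := by
  have h1 := (hasDerivAt_exp (I * t)).comp_const_mul_ofReal
  have h8 := (hasDerivAt_exp (8 * I * t)).comp_const_mul_ofReal
  have h := ((h8.const_mul 3).mul_const (cosh (x : ℂ))).const_add (cosh (3 * (x : ℂ)))
  refine ((h1.const_mul 4).mul h).congr_deriv ?_
  rw [numT]
  ring

theorem hasDerivAt_den_x (x t : ℝ) : HasDerivAt (den · t) (denX x t) x := by
  refine ((((hasDerivAt_id x).const_mul 4).cosh.add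
    (((hasDerivAt_id x).const_mul 2).cosh.const_mul 4)).add_const
    (3 * Real.cos (8 * t))).congr_deriv ?_
  simp only [denX, id]
  ring

theorem hasDerivAt_denX_x (x t : ℝ) : HasDerivAt (denX · t) (denXX x t) x := by
  refine ((((hasDerivAt_id x).const_mul 4).sinh.const_mul 4).add
    (((hasDerivAt_id x).const_mul 2).sinh.const_mul 8)).congr_deriv ?_
  simp only [denXX, id]
  ring

theorem hasDerivAt_den_t (x t : ℝ) : HasDerivAt (den x ·) (denT x t) t := by
  refine ((((hasDerivAt_id t).const_mul 8).cos.const_mul 3).const_add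
    (Real.cosh (4 * x) + 4 * Real.cosh (2 * x))).congr_deriv ?_
  simp only [denT, id]
  ring

theorem hirota_dispersive (x t : ℝ) : I * (numT x t * den x t - num x t * denT x t)
    + (numXX x t * den x t - 2 * numX x t * denX x t + num x t * denXX x t) = 0 := by
  simp only [num, numT, numX, numXX, den, denT, denX, denXX]
  push_cast
  simp only [cosh_ofNat_mul, sinh_ofNat_mul, cos_ofNat_mul, sin_ofNat_mul, exp_ofNat_mul_I_mul]
  simp only [cosh_eq_exp_add_inv, sinh_eq_exp_sub_inv]
  field_simp
  ring_nf
  simp only [I_sq]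
  ring

theorem hirota_norm (x t : ℝ) : den x t * denXX x t - denX x t ^ 2 = ‖num x t‖ ^ 2 := by
  suffices h : ((den x t * denXX x t - denX x t ^ 2 : ℝ) : ℂ) = num x t * conj (num x t) by
    exact_mod_cast h.trans (mul_conj' _)
  simp only [num, den, denX, denXX, map_mul, map_add, ← exp_conj, conj_I, conj_ofReal, ← cosh_conj,
    map_ofNat]
  push_cast
  simp only [neg_mul, mul_neg, exp_neg]
  simp only [cosh_ofNat_mul, sinh_ofNat_mul, cos_ofNat_mul, exp_ofNat_mul_I_mul]
  simp only [cosh_eq_exp_add_inv]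
  field_simp
  ring

end TwoSoliton

/-- The two-soliton function
`Ψ₂(X,T) = 4e^{iT}(cosh 3X + 3e^{8iT} cosh X)/(cosh 4X + 4cosh 2X + 3cos 8T)` satisfies the
focusing nonlinear Schrödinger equation `iΨ_T + Ψ_XX + 2|Ψ|²Ψ = 0` for all `(X,T)`,
the denominator being strictly positive. -/
theorem two_soliton_solves_focusing_NLS :
    ∀ X T : ℝ,
      0 < Real.cosh (4 * X) + 4 * Real.cosh (2 * X) + 3 * Real.cos (8 * T) ∧
      Complex.I * deriv (fun s => Psi₂ X s) T
        + deriv (fun u => deriv (fun v => Psi₂ v T) u) X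
        + 2 * (‖Psi₂ X T‖ : ℂ) ^ 2 * Psi₂ X T = 0 := by
  open TwoSoliton in
  exact fun X T => ⟨den_pos X T,
    focusingNLS_of_hirota_bilinear hasDerivAt_num_x hasDerivAt_numX_x hasDerivAt_num_t
      hasDerivAt_den_x hasDerivAt_denX_x hasDerivAt_den_t (fun x t => (den_pos x t).ne')
      hirota_dispersive hirota_norm X T⟩
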